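/- arXiv:math/0502480 — 4 statements merged into one kernel-verified Lean document; each statement's English description precedes it below -/
import Mathlib

section
/- With the notation of the chart φ_{L₀,L₁} on the Lagrangian Grassmannian: for a lagrangian L complementary to L₁ with graph operator S : L₀ → L₁, the pair (L, L₀) is a Fredholm pair if and only if the self-adjoint operator P_{L₀} J S on L₀ is Fredholm. -/
variable {H : Type*} [NormedAddCommGroup H] [InnerProductSpace ℝ H] [CompleteSpace H]

/-- A bounded operator is Fredholm if it has finite-dimensional kernel, closed range,
and finite-dimensional cokernel. -/
def IsFredholm {X Y : Type*} [NormedAddCommGroup X] [NormedAddCommGroup Y]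
    [NormedSpace ℝ X] [NormedSpace ℝ Y] (T : X →L[ℝ] Y) : Prop :=
  FiniteDimensional ℝ (LinearMap.ker (T : X →ₗ[ℝ] Y)) ∧ IsClosed (LinearMap.range (T : X →ₗ[ℝ] Y) : Set Y) ∧
    FiniteDimensional ℝ (Y ⧸ LinearMap.range (T : X →ₗ[ℝ] Y))

/-!
Put `B = P_{L₀} ∘ J : H → L₀` and `G = id + S : L₀ → H`. Then `L = range G`, and the chart
operator `P_{L₀} J S` is `B ∘ G` because `B` vanishes on `L₀`. As `J L₀ = L₀ᗮ` and `J` is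
injective, `ker B = L₀`; and `-J` restricted to `L₀` is a continuous right inverse of `B`, so `B`
is a quotient map. For `T = B ∘ G` with `G` injective one has `ker T ≅ range G ⊓ ker B`,
`B⁻¹ (range T) = range G ⊔ ker B` and `H ⧸ (range G ⊔ ker B) ≅ L₀ ⧸ range T`, which matches the
three conditions of a Fredholm pair with the three conditions of a Fredholm operator.
-/

open Function LinearMap Submodule

def IsFredholmPair {E : Type*} [NormedAddCommGroup E] [InnerProductSpace ℝ E]
    (M N : Submodule ℝ E) : Prop :=
  FiniteDimensional ℝ ↥(M ⊓ N) ∧ IsClosed ((M ⊔ N : Submodule ℝ E) : Set E) ∧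
    FiniteDimensional ℝ ↥((M ⊔ N)ᗮ)

section LinearAlgebra

variable {R X E F : Type*} [Ring R] [AddCommGroup X] [Module R X] [AddCommGroup E] [Module R E]
  [AddCommGroup F] [Module R F]

theorem LinearMap.map_ker_comp (B : E →ₗ[R] F) (G : X →ₗ[R] E) :
    (ker (B ∘ₗ G)).map G = range G ⊓ ker B := by
  rw [ker_comp, map_comap_eq]

theorem LinearMap.finite_ker_comp_iff (B : E →ₗ[R] F) {G : X →ₗ[R] E} (hG : Injective G) :
    Module.Finite R (ker (B ∘ₗ G)) ↔ Module.Finite R ↥(range G ⊓ ker B) := by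
  rw [← map_ker_comp]
  exact Module.Finite.equiv_iff (equivMapOfInjective G hG _)

theorem LinearMap.comap_range_comp (B : E →ₗ[R] F) (G : X →ₗ[R] E) :
    (range (B ∘ₗ G)).comap B = range G ⊔ ker B := by
  rw [range_comp, comap_map_eq]

theorem LinearMap.finite_quotient_comap_iff {B : E →ₗ[R] F} (hB : Surjective B)
    (q : Submodule R F) : Module.Finite R (E ⧸ q.comap B) ↔ Module.Finite R (F ⧸ q) := by
  have hker : ker (q.mkQ ∘ₗ B) = q.comap B := by rw [ker_comp, ker_mkQ]
  rw [← hker]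
  exact Module.Finite.equiv_iff ((q.mkQ ∘ₗ B).quotKerEquivOfSurjective (q.mkQ_surjective.comp hB))

end LinearAlgebra

theorem Submodule.finiteDimensional_orthogonal_iff {E : Type*} [NormedAddCommGroup E]
    [InnerProductSpace ℝ E] [CompleteSpace E] {K : Submodule ℝ E} (hK : IsClosed (K : Set E)) :
    FiniteDimensional ℝ Kᗮ ↔ FiniteDimensional ℝ (E ⧸ K) := by
  have := hK.completeSpace_coe
  exact (Module.Finite.equiv_iff (quotientEquivOfIsCompl K Kᗮ K.isCompl_orthogonal)).symm

theorem isClosed_preimage_iff_of_rightInverse {X Y : Type*} [TopologicalSpace X]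
    [TopologicalSpace Y] {B : X → Y} {R : Y → X} (hB : Continuous B) (hR : Continuous R)
    (h : RightInverse R B) {s : Set Y} : IsClosed (B ⁻¹' s) ↔ IsClosed s :=
  (Topology.IsQuotientMap.of_inverse hR hB h).isClosed_preimage

theorem isFredholmPair_iff_isFredholm_comp {X E F : Type*} [NormedAddCommGroup X]
    [NormedSpace ℝ X] [NormedAddCommGroup E] [InnerProductSpace ℝ E] [CompleteSpace E]
    [NormedAddCommGroup F] [NormedSpace ℝ F] {B : E →L[ℝ] F} {R : F →L[ℝ] E}
    (hBR : RightInverse R B) {G : X →L[ℝ] E} (hG : Injective G) :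
    IsFredholmPair (range (G : X →ₗ[ℝ] E)) (ker (B : E →ₗ[ℝ] F)) ↔ IsFredholm (B ∘L G) := by
  unfold IsFredholmPair IsFredholm
  rw [ContinuousLinearMap.toLinearMap_comp]
  have hsup := comap_range_comp (B : E →ₗ[ℝ] F) (G : X →ₗ[ℝ] E)
  have hclosed : IsClosed ((range (G : X →ₗ[ℝ] E) ⊔ ker (B : E →ₗ[ℝ] F) : Submodule ℝ E) : Set E) ↔
      IsClosed (range ((B : E →ₗ[ℝ] F) ∘ₗ (G : X →ₗ[ℝ] E)) : Set F) := by
    rw [← hsup, comap_coe, ContinuousLinearMap.coe_coe]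
    exact isClosed_preimage_iff_of_rightInverse B.continuous R.continuous hBR
  rw [hclosed]
  refine and_congr (finite_ker_comp_iff _ hG).symm (and_congr_right fun hcl => ?_)
  rw [finiteDimensional_orthogonal_iff (hclosed.mpr hcl), ← hsup]
  exact finite_quotient_comap_iff hBR.surjective _

section ComplexStructure

variable {E : Type*} [NormedAddCommGroup E] [InnerProductSpace ℝ E] {J : E →L[ℝ] E}

theorem ContinuousLinearMap.injective_of_comp_self_eq_neg_one (hJ2 : J ∘L J = -1) :
    Injective J :=
  LeftInverse.injective (g := -J) fun x => by
    simp [← ContinuousLinearMap.comp_apply, hJ2]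

variable {K : Submodule ℝ E} [K.HasOrthogonalProjection]

theorem Submodule.ker_orthogonalProjectionOnto_comp_of_map_eq_orthogonal (hJ : Injective J)
    (hK : K.map (J : E →ₗ[ℝ] E) = Kᗮ) :
    ker ((K.orthogonalProjectionOnto ∘L J : E →L[ℝ] K) : E →ₗ[ℝ] K) = K := by
  ext x
  rw [mem_ker, ContinuousLinearMap.coe_coe, ContinuousLinearMap.comp_apply,
    orthogonalProjectionOnto_eq_zero_iff, ← hK, ← ContinuousLinearMap.coe_coe, ← mem_comap,
    comap_map_eq_of_injective hJ]

theorem Submodule.rightInverse_orthogonalProjectionOnto_comp (hJ2 : J ∘L J = -1) :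
    RightInverse (-J ∘L K.subtypeL) (K.orthogonalProjectionOnto ∘L J) := fun w => by
  simp [← ContinuousLinearMap.comp_apply J J, hJ2]

end ComplexStructure

theorem Submodule.injective_subtypeL_add {E : Type*} [NormedAddCommGroup E] [NormedSpace ℝ E]
    {K M : Submodule ℝ E} (hKM : Disjoint K M) {S : K →L[ℝ] E} (hS : ∀ u, S u ∈ M) :
    Injective (K.subtypeL + S) := by
  rw [← ContinuousLinearMap.coe_coe, ← LinearMap.ker_eq_bot, LinearMap.ker_eq_bot']
  intro u hu
  have hSu : S u = -u := eq_neg_of_add_eq_zero_right hu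
  have : (u : E) ∈ K ⊓ M := ⟨u.2, by simpa [hSu] using hS u⟩
  simpa [hKM.eq_bot] using this

theorem fredholm_pair_iff_chart_fredholm_general (J : H →L[ℝ] H)
    (hJ2 : J ∘L J = -1)
    (L₀ L₁ L : Submodule ℝ H)
    (hL₀c : IsClosed (L₀ : Set H))
    (hL₀ : L₀.map (J : H →ₗ[ℝ] H) = L₀ᗮ)
    (hcompl₁ : L₀ ⊓ L₁ = ⊥)
    (S : ↥L₀ →L[ℝ] H) (hSrange : ∀ u : ↥L₀, S u ∈ L₁)
    (hgraph : L = LinearMap.range ((L₀.subtypeL + S : ↥L₀ →L[ℝ] H) : ↥L₀ →ₗ[ℝ] H)) :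
    haveI := hL₀c.completeSpace_coe
    ((FiniteDimensional ℝ ↥(L ⊓ L₀) ∧ IsClosed ((L ⊔ L₀ : Submodule ℝ H) : Set H) ∧
        FiniteDimensional ℝ ↥((L ⊔ L₀)ᗮ)) ↔
      IsFredholm ((L₀.orthogonalProjectionOnto) ∘L (J ∘L S))) := by
  have := hL₀c.completeSpace_coe
  have hker := ker_orthogonalProjectionOnto_comp_of_map_eq_orthogonal
    (ContinuousLinearMap.injective_of_comp_self_eq_neg_one hJ2) hL₀
  have hvanish : (L₀.orthogonalProjectionOnto ∘L J) ∘L L₀.subtypeL = 0 := by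
    refine ContinuousLinearMap.ext fun u => ?_
    rw [ContinuousLinearMap.comp_apply, _root_.zero_apply,
      ← ContinuousLinearMap.coe_coe, ← mem_ker, hker]
    exact u.2
  have hchart : (L₀.orthogonalProjectionOnto ∘L J) ∘L (L₀.subtypeL + S) =
      L₀.orthogonalProjectionOnto ∘L (J ∘L S) := by
    rw [ContinuousLinearMap.comp_add, hvanish, zero_add, ContinuousLinearMap.comp_assoc]
  have hpair := isFredholmPair_iff_isFredholm_comp
    (rightInverse_orthogonalProjectionOnto_comp (K := L₀) hJ2)
    (injective_subtypeL_add (disjoint_iff.mpr hcompl₁) hSrange)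
  rw [hker, ← hgraph, hchart] at hpair
  exact hpair

/-- Let `L₁` be a lagrangian complementary to the lagrangian `L₀` and `L` a lagrangian
complementary to `L₁` with graph operator `S : L₀ → L₁`.  Then `(L, L₀)` is a Fredholm
pair if and only if the operator `P_{L₀} J S` on `L₀` is Fredholm. -/
theorem fredholm_pair_iff_chart_fredholm (J : H →L[ℝ] H)
    (hJ2 : J ∘L J = -1) (hJadj : ContinuousLinearMap.adjoint J = -J)
    (L₀ L₁ L : Submodule ℝ H)
    (hL₀c : IsClosed (L₀ : Set H))
    (hL₀ : L₀.map (J : H →ₗ[ℝ] H) = L₀ᗮ) (hL₁ : L₁.map (J : H →ₗ[ℝ] H) = L₁ᗮ)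
    (hL : L.map (J : H →ₗ[ℝ] H) = Lᗮ)
    (hcompl₁ : L₀ ⊓ L₁ = ⊥) (hcompl₂ : L₀ ⊔ L₁ = ⊤)
    (hcompl₃ : L ⊓ L₁ = ⊥) (hcompl₄ : L ⊔ L₁ = ⊤)
    (S : ↥L₀ →L[ℝ] H) (hSrange : ∀ u : ↥L₀, S u ∈ L₁)
    (hgraph : L = LinearMap.range ((L₀.subtypeL + S : ↥L₀ →L[ℝ] H) : ↥L₀ →ₗ[ℝ] H)) :
    haveI := hL₀c.completeSpace_coe
    ((FiniteDimensional ℝ ↥(L ⊓ L₀) ∧ IsClosed ((L ⊔ L₀ : Submodule ℝ H) : Set H) ∧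
        FiniteDimensional ℝ ↥((L ⊔ L₀)ᗮ)) ↔
      IsFredholm ((L₀.orthogonalProjectionOnto) ∘L (J ∘L S))) :=
  fredholm_pair_iff_chart_fredholm_general J hJ2 L₀ L₁ L hL₀c hL₀ hcompl₁ S hSrange hgraph
end

section
/- If (L₀, L₁) is a Fredholm pair of lagrangians in a symplectic Hilbert space H, then there exists a lagrangian L₁' with P_{L₁'} - P_{L₁} compact such that L₀ ∩ L₁' = 0 and L₀ + L₁' = H. -/
/-!
Let `W = L₀ ∩ L₁`, which is finite dimensional. Since `J` is an isometry mapping each `Lᵢ` onto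
`Lᵢ⊥`, it maps `W` onto `L₀⊥ ∩ L₁⊥ = (L₀ + L₁)⊥`. Replace the summand `W` of
`L₁ = (L₁ ⊖ W) ⊕ W` by `JW`: the subspace `L₁' = (L₁ ⊖ W) ⊕ JW` is again lagrangian, because
`J` maps `L₁ ⊖ W` onto `L₁⊥ ∩ (JW)⊥` and `JW` back onto `W`. Its projection differs from that of
`L₁` by `P_{JW} - P_W`, which has finite rank. A vector of `L₀ ∩ L₁'` has no `JW`-component, as
`JW ⊥ L₀ + L₁`, so it lies in `W ∩ W⊥ = 0`; and `L₀ + L₁' = (L₀ + L₁) ⊕ (L₀ + L₁)⊥ = H` because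
`L₀ + L₁` is closed.
-/

variable {H : Type*} [NormedAddCommGroup H] [InnerProductSpace ℝ H] [CompleteSpace H]

/-- The orthogonal projection onto a closed subspace, as an operator `H →L[ℝ] H`. -/
noncomputable def orthProj (L : Submodule ℝ H) (hL : IsClosed (L : Set H)) : H →L[ℝ] H :=
  haveI := hL.completeSpace_coe
  L.subtypeL ∘L L.orthogonalProjectionOnto

open Submodule
open scoped RealInnerProductSpace

lemma orthProj_eq_starProjection {L L' : Submodule ℝ H} (hL : IsClosed (L : Set H))
    (h : L = L') [L'.HasOrthogonalProjection] : orthProj L hL = L'.starProjection := by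
  subst h
  rfl

section OrthogonalProjection

variable {𝕜 E : Type*} [RCLike 𝕜] [NormedAddCommGroup E] [InnerProductSpace 𝕜 E]

lemma Submodule.isCompactOperator_starProjection (K : Submodule 𝕜 E) [FiniteDimensional 𝕜 K] :
    IsCompactOperator K.starProjection :=
  (isCompactOperator_of_locallyCompactSpace_dom K.orthogonalProjectionOnto).clm_comp K.subtypeL

lemma Submodule.IsOrtho.starProjection_sup {U V : Submodule 𝕜 E} [U.HasOrthogonalProjection]
    [V.HasOrthogonalProjection] [(U ⊔ V).HasOrthogonalProjection] (h : U ⟂ V) :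
    (U ⊔ V).starProjection = U.starProjection + V.starProjection := by
  ext x
  refine eq_starProjection_of_mem_orthogonal
    (add_mem (mem_sup_left (starProjection_apply_mem U x))
      (mem_sup_right (starProjection_apply_mem V x))) ?_
  rw [← inf_orthogonal]
  constructor
  · rw [add_apply, ← sub_sub]
    exact sub_mem (sub_starProjection_mem_orthogonal x)
      (isOrtho_iff_le.1 h.symm (starProjection_apply_mem V x))
  · rw [add_apply, add_comm, ← sub_sub]
    exact sub_mem (sub_starProjection_mem_orthogonal x)
      (isOrtho_iff_le.1 h (starProjection_apply_mem U x))

lemma isCompactOperator_starProjection_sup_sub_starProjection_sup {A W W' : Submodule 𝕜 E}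
    [A.HasOrthogonalProjection] [FiniteDimensional 𝕜 W] [FiniteDimensional 𝕜 W']
    [(A ⊔ W).HasOrthogonalProjection] [(A ⊔ W').HasOrthogonalProjection]
    (hW : A ⟂ W) (hW' : A ⟂ W') :
    IsCompactOperator ⇑((A ⊔ W').starProjection - (A ⊔ W).starProjection) := by
  rw [hW.starProjection_sup, hW'.starProjection_sup, add_sub_add_left_eq_sub]
  exact W'.isCompactOperator_starProjection.sub W.isCompactOperator_starProjection

lemma Submodule.inf_sup_eq_bot_of_isOrtho {L₀ L₁ V : Submodule 𝕜 E} (hV₀ : V ⟂ L₀)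
    (hV₁ : V ⟂ L₁) : L₀ ⊓ (L₁ ⊓ (L₀ ⊓ L₁)ᗮ ⊔ V) = ⊥ := by
  rw [eq_bot_iff]
  rintro x ⟨hx₀, hx⟩
  obtain ⟨a, ha, v, hv, rfl⟩ := mem_sup.1 hx
  obtain ⟨ha₁, haW⟩ := mem_inf.1 ha
  have hv0 : v = 0 := by
    have : inner 𝕜 v (a + v) = 0 := hV₀.inner_eq hv hx₀
    rwa [inner_add_right, hV₁.inner_eq hv ha₁, zero_add, inner_self_eq_zero] at this
  subst hv0
  rw [add_zero] at hx₀ ⊢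
  exact (orthogonal_disjoint (L₀ ⊓ L₁)).le_bot (mem_inf.2 ⟨mem_inf.2 ⟨hx₀, ha₁⟩, haW⟩)

lemma Submodule.sup_inf_orthogonal_sup_orthogonal_eq_top (L₀ L₁ : Submodule 𝕜 E)
    [(L₀ ⊓ L₁).HasOrthogonalProjection] [(L₀ ⊔ L₁).HasOrthogonalProjection] :
    L₀ ⊔ (L₁ ⊓ (L₀ ⊓ L₁)ᗮ ⊔ (L₀ ⊔ L₁)ᗮ) = ⊤ := by
  have h : L₀ ⊔ L₁ ⊓ (L₀ ⊓ L₁)ᗮ = L₀ ⊔ L₁ := by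
    conv_rhs => rw [← sup_orthogonal_inf_of_hasOrthogonalProjection (inf_le_right : L₀ ⊓ L₁ ≤ L₁)]
    rw [← sup_assoc, sup_eq_left.2 (inf_le_left : L₀ ⊓ L₁ ≤ L₀), inf_comm]
  rw [← sup_assoc, h, sup_orthogonal_of_hasOrthogonalProjection]

end OrthogonalProjection

structure IsOrthogonalComplexStructure (J : H →L[ℝ] H) : Prop where
  comp_self : J ∘L J = -1
  adjoint_eq : ContinuousLinearMap.adjoint J = -J

namespace IsOrthogonalComplexStructure

variable {J : H →L[ℝ] H}

lemma apply_apply (hJ : IsOrthogonalComplexStructure J) (x : H) : J (J x) = -x := by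
  simpa using DFunLike.congr_fun hJ.comp_self x

lemma inner_map_map (hJ : IsOrthogonalComplexStructure J) (x y : H) : ⟪J x, J y⟫ = ⟪x, y⟫ := by
  rw [← ContinuousLinearMap.adjoint_inner_right, hJ.adjoint_eq, neg_apply,
    hJ.apply_apply, neg_neg]

lemma injective (hJ : IsOrthogonalComplexStructure J) : Function.Injective J :=
  fun x y h => by simpa [hJ.apply_apply] using congrArg J h

lemma map_map (hJ : IsOrthogonalComplexStructure J) (K : Submodule ℝ H) :
    (K.map (J : H →ₗ[ℝ] H)).map (J : H →ₗ[ℝ] H) = K := by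
  rw [← map_comp, show (J : H →ₗ[ℝ] H) ∘ₗ J = -LinearMap.id from LinearMap.ext hJ.apply_apply,
    Submodule.map_neg, map_id]

noncomputable def toLinearIsometryEquiv (hJ : IsOrthogonalComplexStructure J) : H ≃ₗᵢ[ℝ] H :=
  (LinearEquiv.ofLinearMap (J : H →ₗ[ℝ] H) (-J : H →L[ℝ] H)
    (LinearMap.ext fun x => by simp [hJ.apply_apply])
    (LinearMap.ext fun x => by simp [hJ.apply_apply])).isometryOfInner hJ.inner_map_map

lemma map_orthogonal (hJ : IsOrthogonalComplexStructure J) (K : Submodule ℝ H) :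
    Kᗮ.map (J : H →ₗ[ℝ] H) = (K.map (J : H →ₗ[ℝ] H))ᗮ :=
  K.map_orthogonal_equiv hJ.toLinearIsometryEquiv

lemma map_inf (hJ : IsOrthogonalComplexStructure J) (K K' : Submodule ℝ H) :
    (K ⊓ K').map (J : H →ₗ[ℝ] H) = K.map (J : H →ₗ[ℝ] H) ⊓ K'.map (J : H →ₗ[ℝ] H) :=
  Submodule.map_inf _ hJ.injective

end IsOrthogonalComplexStructure

section Lagrangian

variable {E : Type*} [NormedAddCommGroup E] [InnerProductSpace ℝ E]

def IsLagrangian (J : E →L[ℝ] E) (L : Submodule ℝ E) : Prop :=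
  L.map (J : E →ₗ[ℝ] E) = Lᗮ

lemma IsLagrangian.map_isOrtho_of_le {J : E →L[ℝ] E} {L W : Submodule ℝ E}
    (hL : IsLagrangian J L) (hWL : W ≤ L) : W.map (J : E →ₗ[ℝ] E) ⟂ L :=
  isOrtho_iff_le.2 (hL ▸ map_mono hWL)

end Lagrangian

namespace IsLagrangian

variable {J : H →L[ℝ] H} {L : Submodule ℝ H}

lemma orthogonal_orthogonal (hJ : IsOrthogonalComplexStructure J) (hL : IsLagrangian J L) :
    Lᗮᗮ = L := by
  rw [← hL, ← hJ.map_orthogonal, ← hL, hJ.map_map]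

lemma isClosed (hJ : IsOrthogonalComplexStructure J) (hL : IsLagrangian J L) :
    IsClosed (L : Set H) := by
  rw [← hL.orthogonal_orthogonal hJ]
  exact isClosed_orthogonal _

lemma map_inf_eq_orthogonal_sup (hJ : IsOrthogonalComplexStructure J) {L₀ L₁ : Submodule ℝ H}
    (hL₀ : IsLagrangian J L₀) (hL₁ : IsLagrangian J L₁) :
    (L₀ ⊓ L₁).map (J : H →ₗ[ℝ] H) = (L₀ ⊔ L₁)ᗮ := by
  rw [hJ.map_inf, hL₀, hL₁, inf_orthogonal]

theorem inf_orthogonal_sup_map (hJ : IsOrthogonalComplexStructure J) (hL : IsLagrangian J L)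
    {W : Submodule ℝ H} [FiniteDimensional ℝ W] (hWL : W ≤ L) :
    IsLagrangian J (L ⊓ Wᗮ ⊔ W.map (J : H →ₗ[ℝ] H)) := by
  have hclosed : IsClosed ((Lᗮ ⊔ W : Submodule ℝ H) : Set H) :=
    isClosed_sup_finiteDimensional _ _ (isClosed_orthogonal L)
  have := hclosed.completeSpace_coe
  have hAorth : (L ⊓ Wᗮ)ᗮ = Lᗮ ⊔ W := by
    rw [← Submodule.orthogonal_orthogonal (Lᗮ ⊔ W), ← inf_orthogonal, hL.orthogonal_orthogonal hJ]
  have hW : W ≤ (W.map (J : H →ₗ[ℝ] H))ᗮ :=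
    isOrtho_iff_le.1 ((hL.map_isOrtho_of_le hWL).mono_right hWL).symm
  unfold IsLagrangian
  rw [Submodule.map_sup, hJ.map_inf, hL, hJ.map_orthogonal, hJ.map_map, ← inf_orthogonal, hAorth,
    sup_comm Lᗮ W, sup_inf_assoc_of_le _ hW, sup_comm]

end IsLagrangian

theorem fredholm_pair_compl_compact_perturbation_general (J : H →L[ℝ] H)
    (hJ2 : J ∘L J = -1) (hJadj : ContinuousLinearMap.adjoint J = -J)
    (L₀ L₁ : Submodule ℝ H)
    (hL₁c : IsClosed (L₁ : Set H))
    (hL₀ : L₀.map (J : H →ₗ[ℝ] H) = L₀ᗮ) (hL₁ : L₁.map (J : H →ₗ[ℝ] H) = L₁ᗮ)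
    (hfin : FiniteDimensional ℝ ↥(L₀ ⊓ L₁))
    (hclosed : IsClosed ((L₀ ⊔ L₁ : Submodule ℝ H) : Set H)) :
    ∃ (L₁' : Submodule ℝ H) (hc : IsClosed (L₁' : Set H)),
      L₁'.map (J : H →ₗ[ℝ] H) = L₁'ᗮ ∧
      IsCompactOperator (⇑(orthProj L₁' hc - orthProj L₁ hL₁c)) ∧
      L₀ ⊓ L₁' = ⊥ ∧ L₀ ⊔ L₁' = ⊤ := by
  have hJ : IsOrthogonalComplexStructure J := ⟨hJ2, hJadj⟩
  set W := L₀ ⊓ L₁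
  set A := L₁ ⊓ Wᗮ
  have hL₁' : IsLagrangian J (A ⊔ W.map (J : H →ₗ[ℝ] H)) :=
    IsLagrangian.inf_orthogonal_sup_map hJ hL₁ inf_le_right
  have hV₀ := IsLagrangian.map_isOrtho_of_le hL₀ (inf_le_left : W ≤ L₀)
  have hV₁ := IsLagrangian.map_isOrtho_of_le hL₁ (inf_le_right : W ≤ L₁)
  refine ⟨_, hL₁'.isClosed hJ, hL₁', ?_, inf_sup_eq_bot_of_isOrtho hV₀ hV₁, ?_⟩
  · have hAc : IsClosed (A : Set H) := hL₁c.inter W.isClosed_orthogonal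
    have := hAc.completeSpace_coe
    have := (hL₁'.isClosed hJ).completeSpace_coe
    have := hL₁c.completeSpace_coe
    have hdecomp : A ⊔ W = L₁ := by
      rw [sup_comm, show A = Wᗮ ⊓ L₁ from inf_comm _ _]
      exact sup_orthogonal_inf_of_hasOrthogonalProjection inf_le_right
    have : (A ⊔ W).HasOrthogonalProjection := by rw [hdecomp]; infer_instance
    rw [orthProj_eq_starProjection _ rfl, orthProj_eq_starProjection hL₁c hdecomp.symm]
    exact isCompactOperator_starProjection_sup_sub_starProjection_sup
      (isOrtho_iff_le.2 inf_le_right) (hV₁.mono_right inf_le_left).symm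
  · have := hclosed.completeSpace_coe
    rw [IsLagrangian.map_inf_eq_orthogonal_sup hJ hL₀ hL₁]
    exact sup_inf_orthogonal_sup_orthogonal_eq_top L₀ L₁

/-- If `(L₀, L₁)` is a Fredholm pair of lagrangians, then there is a lagrangian `L₁'`
which is a compact perturbation of `L₁` and is complementary to `L₀`. -/
theorem fredholm_pair_compl_compact_perturbation (J : H →L[ℝ] H)
    (hJ2 : J ∘L J = -1) (hJadj : ContinuousLinearMap.adjoint J = -J)
    (L₀ L₁ : Submodule ℝ H)
    (hL₀c : IsClosed (L₀ : Set H)) (hL₁c : IsClosed (L₁ : Set H))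
    (hL₀ : L₀.map (J : H →ₗ[ℝ] H) = L₀ᗮ) (hL₁ : L₁.map (J : H →ₗ[ℝ] H) = L₁ᗮ)
    (hfin : FiniteDimensional ℝ ↥(L₀ ⊓ L₁))
    (hclosed : IsClosed ((L₀ ⊔ L₁ : Submodule ℝ H) : Set H))
    (hcofin : FiniteDimensional ℝ ↥((L₀ ⊔ L₁)ᗮ)) :
    ∃ (L₁' : Submodule ℝ H) (hc : IsClosed (L₁' : Set H)),
      L₁'.map (J : H →ₗ[ℝ] H) = L₁'ᗮ ∧
      IsCompactOperator (⇑(orthProj L₁' hc - orthProj L₁ hL₁c)) ∧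
      L₀ ⊓ L₁' = ⊥ ∧ L₀ ⊔ L₁' = ⊤ :=
  fredholm_pair_compl_compact_perturbation_general J hJ2 hJadj L₀ L₁ hL₁c hL₀ hL₁ hfin hclosed
end

section
/- If T is a bounded invertible operator on a Hilbert space H commuting with the complex structure J, T - I is compact, and T(L₀) = L₀ for a lagrangian L₀, then the unitary part U = T S⁻¹ of the polar decomposition T = US (S the positive square root of T*T) satisfies: U commutes with J, U - I is compact. -/
/-!
Since `J* = -J = J⁻¹` and `J` commutes with `T` and `T*`, the operator `J* S J` is a positive
square root of `J* T*T J = T*T`. Positive square roots of an invertible positive operator are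
unique, so `J* S J = S`; hence `S`, `S⁻¹` and `U = T S⁻¹` commute with `J`.

Uniqueness is proved without functional calculus. If `P² = Q²`, then `F = P + Q` anticommutes
with `D = P - Q`, so `F` commutes with `D²` and `F D² ≥ 0`, because commuting positive operators
have a positive product (von Neumann's iteration `X ↦ X - X²`, which tends strongly to `0` when
`0 ≤ X ≤ 1`). On the other hand `⟪F D² x, x⟫ = -⟪F D x, D x⟫ ≤ 0`, which forces `P D x = 0`.

For compactness, `S² - 1 = T* (T - 1) + (T - 1)*` is compact by Schauder's theorem, hence so is
`S - 1 = (S² - 1) (S + 1)⁻¹`, and finally `U - 1 = ((T - 1) - (S - 1)) S⁻¹`.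
-/

open ContinuousLinearMap RealInnerProductSpace Filter Topology Metric

def subSqIterate {R : Type*} [Ring R] (X : R) (n : ℕ) : R := (fun Y ↦ Y - Y * Y)^[n] X

section Ring

variable {R : Type*} [Ring R]

@[simp]
lemma subSqIterate_zero (X : R) : subSqIterate X 0 = X := rfl

lemma subSqIterate_succ (X : R) (n : ℕ) :
    subSqIterate X (n + 1) = subSqIterate X n - subSqIterate X n * subSqIterate X n :=
  Function.iterate_succ_apply' _ _ _

lemma Commute.subSqIterate {X Y : R} (h : Commute X Y) (n : ℕ) :
    Commute (subSqIterate X n) Y := by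
  induction n with
  | zero => exact h
  | succ n ih => rw [subSqIterate_succ]; exact ih.sub_left (ih.mul_left ih)

end Ring

theorem TotallyBounded.image_of_forall_dist_lt {α β γ : Type*} [PseudoMetricSpace β]
    [PseudoMetricSpace γ] {f : α → β} {g : α → γ} {s : Set α} (hf : TotallyBounded (f '' s))
    (hfg : ∀ ε > 0, ∃ δ > 0, ∀ x ∈ s, ∀ y ∈ s, dist (f x) (f y) < δ → dist (g x) (g y) < ε) :
    TotallyBounded (g '' s) := by
  rw [totallyBounded_iff_ultrafilter] at hf ⊢
  intro u hu
  have hgs : g '' s ∈ u := le_principal_iff.1 hu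
  set v := Ultrafilter.ofComapInfPrincipal hgs
  have hs : s ∈ v := Ultrafilter.ofComapInfPrincipal_mem hgs
  rw [← Ultrafilter.ofComapInfPrincipal_eq_of_map hgs]
  have hfv := Metric.cauchy_iff.1 <| hf (v.map f) (le_principal_iff.2 (image_mem_map hs))
  refine Metric.cauchy_iff.2 ⟨inferInstance, fun ε hε ↦ ?_⟩
  obtain ⟨δ, hδ, hfg⟩ := hfg ε hε
  obtain ⟨t, ht, htδ⟩ := hfv.2 δ hδ
  refine ⟨g '' (f ⁻¹' t ∩ s), image_mem_map (inter_mem ht hs), ?_⟩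
  rintro _ ⟨x, ⟨hxt, hxs⟩, rfl⟩ _ ⟨y, ⟨hyt, hys⟩, rfl⟩
  exact hfg x hxs y hys (htδ _ hxt _ hyt)

section Schauder

variable {𝕜 E F : Type*} [RCLike 𝕜] [NormedAddCommGroup E] [InnerProductSpace 𝕜 E]
  [CompleteSpace E] [NormedAddCommGroup F] [InnerProductSpace 𝕜 F] [CompleteSpace F]

/-- Schauder's theorem: by `‖K* z‖² ≤ ‖K K* z‖ ‖z‖`, on the unit ball `K*` is uniformly
controlled by the compact operator `K K*`. -/
theorem IsCompactOperator.adjoint {K : E →L[𝕜] F} (hK : IsCompactOperator K) :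
    IsCompactOperator (ContinuousLinearMap.adjoint K) := by
  set Kd := ContinuousLinearMap.adjoint K
  refine (isCompactOperator_iff_exists_mem_nhds_isCompact_closure_image _).2
    ⟨closedBall 0 1, closedBall_mem_nhds _ one_pos, ?_⟩
  have hKKd : IsCompactOperator (K ∘L Kd) := hK.comp_clm Kd
  have hball : TotallyBounded ((K ∘L Kd) '' closedBall 0 1) :=
    (IsCompactOperator.isCompact_closure_image_closedBall
      (f := ((K ∘L Kd : F →L[𝕜] F) : F →ₗ[𝕜] F)) hKKd 1).totallyBounded.subset subset_closure
  refine (hball.image_of_forall_dist_lt fun ε hε ↦ ⟨ε ^ 2 / 2, by positivity,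
    fun x hx y hy hxy ↦ ?_⟩).closure.isCompact_of_isClosed isClosed_closure
  have hdiam : ‖x - y‖ ≤ 2 := by
    rw [mem_closedBall_zero_iff] at hx hy
    linarith [norm_sub_le x y]
  have hbound : ‖Kd (x - y)‖ ^ 2 ≤ ‖K (Kd (x - y))‖ * ‖x - y‖ := by
    rw [apply_norm_sq_eq_inner_adjoint_left, adjoint_adjoint]
    exact (RCLike.re_le_norm _).trans (norm_inner_le_norm _ _)
  rw [dist_eq_norm, comp_apply, comp_apply, ← map_sub, ← map_sub] at hxy
  rw [dist_eq_norm, ← map_sub]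
  refine lt_of_pow_lt_pow_left₀ 2 hε.le ?_
  nlinarith [norm_nonneg (K (Kd (x - y)))]

theorem IsCompactOperator.adjoint_mul_self_sub_one {T : E →L[𝕜] E}
    (hT : IsCompactOperator ⇑(T - 1)) :
    IsCompactOperator ⇑(ContinuousLinearMap.adjoint T * T - 1) := by
  have hT' : IsCompactOperator ⇑(ContinuousLinearMap.adjoint T - 1) := by
    have := hT.adjoint
    rwa [← star_eq_adjoint, star_sub, star_one, star_eq_adjoint] at this
  rw [show ContinuousLinearMap.adjoint T * T - 1
      = ContinuousLinearMap.adjoint T * (T - 1) + (ContinuousLinearMap.adjoint T - 1) by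
    noncomm_ring, FunLike.coe_add, FunLike.coe_mul_eq_comp]
  exact (hT.clm_comp _).add hT'

end Schauder

namespace ContinuousLinearMap

variable {E : Type*} [NormedAddCommGroup E] [InnerProductSpace ℝ E]

lemma inner_subSqIterate_succ {n : ℕ} (X : E →L[ℝ] E) (h : (subSqIterate X n).IsPositive)
    (x : E) :
    ⟪subSqIterate X (n + 1) x, x⟫ = ⟪subSqIterate X n x, x⟫ - ‖subSqIterate X n x‖ ^ 2 := by
  rw [subSqIterate_succ, sub_apply, inner_sub_left, mul_apply_eq_comp,
    h.inner_left_eq_inner_right (subSqIterate X n x), real_inner_self_eq_norm_sq]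

variable [CompleteSpace E]

lemma IsPositive.conj_of_isSelfAdjoint {A X : E →L[ℝ] E} (hA : A.IsPositive)
    (hX : IsSelfAdjoint X) : (X * A * X).IsPositive := by
  simpa [hX.adjoint_eq, mul_def, comp_assoc] using hA.conj_adjoint X

lemma _root_.IsSelfAdjoint.isPositive_mul_self {X : E →L[ℝ] E} (hX : IsSelfAdjoint X) :
    (X * X).IsPositive := by
  simpa using isPositive_one.conj_of_isSelfAdjoint hX

lemma IsPositive.one_sub_inv_norm_smul {P : E →L[ℝ] E} (hP : P.IsPositive) :
    (1 - ‖P‖⁻¹ • P).IsPositive := by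
  refine (isPositive_iff' _).mpr ⟨(IsSelfAdjoint.one _).sub
    (hP.smul_of_nonneg (inv_nonneg.2 (norm_nonneg P))).isSelfAdjoint, fun x ↦ ?_⟩
  have hPx : ⟪P x, x⟫ ≤ ‖P‖ * ‖x‖ ^ 2 := calc
    ⟪P x, x⟫ ≤ ‖P x‖ * ‖x‖ := real_inner_le_norm _ _
    _ ≤ ‖P‖ * ‖x‖ * ‖x‖ := by gcongr; exact P.le_opNorm x
    _ = ‖P‖ * ‖x‖ ^ 2 := by ring
  have : ‖P‖⁻¹ * ⟪P x, x⟫ ≤ ‖x‖ ^ 2 := by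
    rcases (norm_nonneg P).eq_or_lt with h | h
    · simp [← h]
    · rwa [inv_mul_le_iff₀ h]
  simpa [inner_sub_left, real_inner_smul_left, real_inner_self_eq_norm_sq] using this

lemma IsPositive.sub_mul_self {X : E →L[ℝ] E} (h₀ : X.IsPositive) (h₁ : (1 - X).IsPositive) :
    (X - X * X).IsPositive := by
  rw [show X - X * X = X * (1 - X) * X + (1 - X) * X * (1 - X) by noncomm_ring]
  exact (h₁.conj_of_isSelfAdjoint h₀.isSelfAdjoint).add
    (h₀.conj_of_isSelfAdjoint h₁.isSelfAdjoint)

lemma IsPositive.one_sub_sub_mul_self {X : E →L[ℝ] E} (h₁ : (1 - X).IsPositive)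
    (hX : IsSelfAdjoint X) : (1 - (X - X * X)).IsPositive := by
  rw [show 1 - (X - X * X) = (1 - X) + X * X by noncomm_ring]
  exact h₁.add hX.isPositive_mul_self

lemma IsPositive.norm_apply_sq_le_inner {X : E →L[ℝ] E} (h₀ : X.IsPositive)
    (h₁ : (1 - X).IsPositive) (x : E) : ‖X x‖ ^ 2 ≤ ⟪X x, x⟫ := by
  have := (h₀.sub_mul_self h₁).inner_nonneg_left x
  rw [sub_apply, inner_sub_left, mul_apply_eq_comp, h₀.inner_left_eq_inner_right (X x),
    real_inner_self_eq_norm_sq] at this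
  linarith

lemma IsPositive.apply_eq_zero_of_inner_eq_zero {P : E →L[ℝ] E} (hP : P.IsPositive) {x : E}
    (hx : ⟪P x, x⟫ = 0) : P x = 0 := by
  rcases eq_or_ne P 0 with rfl | hP₀
  · rfl
  have hX := (hP.smul_of_nonneg (inv_nonneg.2 (norm_nonneg P))).norm_apply_sq_le_inner
    hP.one_sub_inv_norm_smul x
  rw [smul_apply, real_inner_smul_left, hx, mul_zero] at hX
  have : ‖P‖⁻¹ • P x = 0 :=
    norm_eq_zero.1 <| pow_eq_zero_iff two_ne_zero |>.1 <| le_antisymm hX (sq_nonneg _)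
  exact (smul_eq_zero.1 this).resolve_left (inv_ne_zero (norm_ne_zero_iff.2 hP₀))

lemma IsPositive.isPositive_subSqIterate {X : E →L[ℝ] E} (h₀ : X.IsPositive)
    (h₁ : (1 - X).IsPositive) (n : ℕ) :
    (subSqIterate X n).IsPositive ∧ (1 - subSqIterate X n).IsPositive := by
  induction n with
  | zero => exact ⟨h₀, h₁⟩
  | succ n ih =>
    rw [subSqIterate_succ]
    exact ⟨ih.1.sub_mul_self ih.2, ih.2.one_sub_sub_mul_self ih.1.isSelfAdjoint⟩

/-- The sum `∑ ‖Xₙ x‖²` telescopes to at most `⟪X x, x⟫`. -/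
lemma IsPositive.tendsto_subSqIterate_apply {X : E →L[ℝ] E} (h₀ : X.IsPositive)
    (h₁ : (1 - X).IsPositive) (x : E) :
    Tendsto (fun n ↦ subSqIterate X n x) atTop (𝓝 0) := by
  have hpos n := (h₀.isPositive_subSqIterate h₁ n).1
  have hsum n : ∑ k ∈ Finset.range n, ‖subSqIterate X k x‖ ^ 2 ≤ ⟪X x, x⟫ := by
    have := Finset.sum_range_sub' (fun k ↦ ⟪subSqIterate X k x, x⟫) n
    simp only [inner_subSqIterate_succ X (hpos _), sub_sub_cancel, subSqIterate_zero] at this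
    linarith [(hpos n).inner_nonneg_left x]
  have hsq := (summable_of_sum_range_le (fun _ ↦ by positivity) hsum).tendsto_atTop_zero
  rw [tendsto_zero_iff_norm_tendsto_zero]
  simpa using hsq.sqrt

/-- `⟪B Xₙ x, x⟫` decreases, since `B Xₙ - B Xₙ₊₁ = Xₙ B Xₙ ≥ 0`, and tends to `0`. -/
lemma IsPositive.inner_mul_nonneg_of_commute {X B : E →L[ℝ] E} (h₀ : X.IsPositive)
    (h₁ : (1 - X).IsPositive) (hB : B.IsPositive) (hXB : Commute X B) (x : E) :
    0 ≤ ⟪(B * X) x, x⟫ := by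
  have hanti : Antitone fun n ↦ ⟪(B * subSqIterate X n) x, x⟫ := by
    refine antitone_nat_of_succ_le fun n ↦ ?_
    have hstep : B * subSqIterate X n - B * subSqIterate X (n + 1) =
        subSqIterate X n * B * subSqIterate X n := by
      rw [subSqIterate_succ, (hXB.subSqIterate n).eq, mul_sub, ← mul_assoc]
      abel
    have := (hB.conj_of_isSelfAdjoint
      (h₀.isPositive_subSqIterate h₁ n).1.isSelfAdjoint).inner_nonneg_left x
    rw [← hstep, sub_apply, inner_sub_left] at this
    linarith
  have hlim : Tendsto (fun n ↦ ⟪(B * subSqIterate X n) x, x⟫) atTop (𝓝 0) := by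
    simpa using ((B.continuous.tendsto 0).comp (h₀.tendsto_subSqIterate_apply h₁ x)).inner
      tendsto_const_nhds
  exact hanti.le_of_tendsto hlim 0

theorem IsPositive.mul_of_commute {A B : E →L[ℝ] E} (hA : A.IsPositive) (hB : B.IsPositive)
    (h : Commute A B) : (A * B).IsPositive := by
  refine (isPositive_iff' _).2
    ⟨(hA.isSelfAdjoint.commute_iff hB.isSelfAdjoint).1 h, fun x ↦ ?_⟩
  rcases eq_or_ne A 0 with rfl | hA₀
  · simp
  have hX := (hA.smul_of_nonneg (inv_nonneg.2 (norm_nonneg A))).inner_mul_nonneg_of_commute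
    hA.one_sub_inv_norm_smul hB (h.smul_left _) x
  rw [h.eq, show B * A = ‖A‖ • (B * (‖A‖⁻¹ • A)) by
    rw [mul_smul_comm, smul_smul, mul_inv_cancel₀ (norm_ne_zero_iff.2 hA₀), one_smul],
    smul_apply, real_inner_smul_left]
  exact mul_nonneg (norm_nonneg A) hX

theorem IsPositive.eq_of_mul_self_eq {P Q : E →L[ℝ] E} (hP : P.IsPositive) (hQ : Q.IsPositive)
    (hPu : IsUnit P) (h : P * P = Q * Q) : P = Q := by
  have hanti : (P + Q) * (P - Q) = -((P - Q) * (P + Q)) := by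
    rw [eq_neg_iff_add_eq_zero]
    calc (P + Q) * (P - Q) + (P - Q) * (P + Q) = (2 : ℝ) • (P * P - Q * Q) := by
          rw [two_smul]; noncomm_ring
      _ = 0 := by rw [h, sub_self, smul_zero]
  have hD : IsSelfAdjoint (P - Q) := hP.isSelfAdjoint.sub hQ.isSelfAdjoint
  set D := P - Q
  set F := P + Q
  have hcomm : Commute F (D * D) := by
    rw [Commute, SemiconjBy, ← sub_eq_zero]
    calc F * (D * D) - D * D * F = (D * F + F * D) * D - D * (D * F + F * D) := by noncomm_ring
      _ = 0 := by rw [hanti, add_neg_cancel, mul_zero, zero_mul, sub_zero]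
  have hFDD : F * (D * D) = -(D * F * D) := by rw [← mul_assoc, hanti, neg_mul]
  have hker x : D x = 0 := by
    have hF : ⟪F (D x), D x⟫ ≤ 0 := by
      have := ((hP.add hQ).mul_of_commute hD.isPositive_mul_self hcomm).inner_nonneg_left x
      rw [hFDD, neg_apply, inner_neg_left, mul_apply_eq_comp, mul_apply_eq_comp,
        show ⟪D (F (D x)), x⟫ = ⟪F (D x), D x⟫ from hD.isSymmetric _ _] at this
      linarith
    have hPD : ⟪P (D x), D x⟫ = 0 := by
      simp only [F, add_apply, inner_add_left] at hF
      linarith [hP.inner_nonneg_left (D x), hQ.inner_nonneg_left (D x)]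
    refine (isUnit_iff_bijective.1 hPu).1 ?_
    rw [hP.apply_eq_zero_of_inner_eq_zero hPD, map_zero]
  exact sub_eq_zero.1 (ext hker)

theorem IsPositive.commute_of_commute_mul_self {S V : E →L[ℝ] E} (hS : S.IsPositive)
    (hSu : IsUnit S) (hV : V ∈ unitary (E →L[ℝ] E)) (h : Commute V (S * S)) :
    Commute V S := by
  have hconj : (star V * S * V).IsPositive := by
    simpa [star_eq_adjoint, mul_def, comp_assoc] using hS.adjoint_conj V
  have hsq : S * S = star V * S * V * (star V * S * V) := calc
    S * S = star V * V * (S * S) := by rw [Unitary.star_mul_self_of_mem hV, one_mul]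
    _ = star V * S * (V * star V) * S * V := by
      rw [Unitary.mul_star_self_of_mem hV, mul_assoc, h.eq]; noncomm_ring
    _ = star V * S * V * (star V * S * V) := by noncomm_ring
  have hS' : S = star V * S * V := hS.eq_of_mul_self_eq hconj hSu hsq
  calc V * S = V * (star V * S * V) := congrArg (V * ·) hS'
    _ = S * V := by rw [← mul_assoc, ← mul_assoc, Unitary.mul_star_self_of_mem hV, one_mul]

lemma IsPositive.isUnit_add_one {S : E →L[ℝ] E} (hS : S.IsPositive) : IsUnit (S + 1) := by
  refine isUnit_of_forall_le_norm_inner_map _ one_pos fun x ↦ ?_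
  have : ⟪(S + 1) x, x⟫ = ⟪S x, x⟫ + ‖x‖ ^ 2 := by
    rw [add_apply, inner_add_left, one_apply_eq_self, real_inner_self_eq_norm_sq]
  rw [NNReal.coe_one, mul_one, this, Real.norm_eq_abs]
  exact (le_add_of_nonneg_left (hS.inner_nonneg_left x)).trans (le_abs_self _)

lemma IsPositive.isCompactOperator_sub_one {S : E →L[ℝ] E} (hS : S.IsPositive)
    (h : IsCompactOperator ⇑(S * S - 1)) : IsCompactOperator ⇑(S - 1) := by
  obtain ⟨u, hu⟩ := hS.isUnit_add_one
  have hfactor : S - 1 = (S * S - 1) * ↑u⁻¹ := by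
    rw [show S * S - 1 = (S - 1) * ↑u by rw [hu]; noncomm_ring, mul_assoc, Units.mul_inv,
      mul_one]
  rw [hfactor, FunLike.coe_mul_eq_comp]
  exact h.comp_clm _

end ContinuousLinearMap

variable {H : Type*} [NormedAddCommGroup H] [InnerProductSpace ℝ H] [CompleteSpace H]

theorem polar_part_commutes_and_compact_general (J : H →L[ℝ] H)
    (hJ2 : J ∘L J = -1) (hJadj : ContinuousLinearMap.adjoint J = -J)
    (T : H →L[ℝ] H) (hTinv : IsUnit T) (hTJ : T ∘L J = J ∘L T)
    (hTK : IsCompactOperator (⇑(T - 1)))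
    (S U : H →L[ℝ] H) (hSpos : S.IsPositive)
    (hS2 : S * S = ContinuousLinearMap.adjoint T * T) (hUS : U * S = T) :
    U ∘L J = J ∘L U ∧ IsCompactOperator (⇑(U - 1)) := by
  have hJ : J ∈ unitary (H →L[ℝ] H) := by
    rw [Unitary.mem_iff, star_eq_adjoint, hJadj, neg_mul, mul_neg, mul_def, hJ2, neg_neg,
      and_self]
  have hJT : Commute J T := hTJ.symm
  have hJT' : Commute J (adjoint T) := by
    simpa [star_eq_adjoint, hJadj] using hJT.star_star
  obtain ⟨s, rfl⟩ : IsUnit S := ((Commute.refl S).isUnit_mul_iff.1 (hS2 ▸ hTinv.star.mul hTinv)).1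
  have hJS : Commute J s :=
    hSpos.commute_of_commute_mul_self ⟨s, rfl⟩ hJ (hS2 ▸ hJT'.mul_right hJT)
  obtain rfl : U = T * ↑s⁻¹ := by rw [← hUS, mul_assoc, Units.mul_inv, mul_one]
  refine ⟨(hJT.mul_right hJS.units_inv_right).eq.symm, ?_⟩
  have hS : IsCompactOperator ⇑((s : H →L[ℝ] H) - 1) :=
    hSpos.isCompactOperator_sub_one (hS2 ▸ hTK.adjoint_mul_self_sub_one)
  rw [show T * ↑s⁻¹ - 1 = ((T - 1) - (↑s - 1)) * ↑s⁻¹ by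
    simp only [sub_mul, one_mul, Units.mul_inv]; abel, FunLike.coe_mul_eq_comp]
  exact (hTK.sub hS).comp_clm _

/-- Let `T` be a bounded invertible operator commuting with the complex structure `J`,
with `T - I` compact and `T(L₀) = L₀` for a lagrangian `L₀`.  If `S` is the positive
square root of `T*T` and `U = T S⁻¹` is the unitary part of the polar decomposition
`T = U S`, then `U` commutes with `J` and `U - I` is compact. -/
theorem polar_part_commutes_and_compact (J : H →L[ℝ] H)
    (hJ2 : J ∘L J = -1) (hJadj : ContinuousLinearMap.adjoint J = -J)
    (L₀ : Submodule ℝ H) (hL₀ : L₀.map (J : H →ₗ[ℝ] H) = L₀ᗮ)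
    (T : H →L[ℝ] H) (hTinv : IsUnit T) (hTJ : T ∘L J = J ∘L T)
    (hTK : IsCompactOperator (⇑(T - 1))) (hTL₀ : L₀.map (T : H →ₗ[ℝ] H) = L₀)
    (S U : H →L[ℝ] H) (hSpos : S.IsPositive)
    (hS2 : S * S = ContinuousLinearMap.adjoint T * T) (hUS : U * S = T) :
    U ∘L J = J ∘L U ∧ IsCompactOperator (⇑(U - 1)) :=
  polar_part_commutes_and_compact_general J hJ2 hJadj T hTinv hTJ hTK S U hSpos hS2 hUS
end

section
/- Let (L₀, L₁) be complementary lagrangians and let S, S' : L₀ → L₁ be bounded operators with graphs L = Gr(S) and L' = Gr(S'). If S - S' is compact, then P_{L'} - P_L is compact. -/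
/-!
Write `P, P'` for the projections onto `L = Gr(S)`, `L' = Gr(S')`. Since `P'` fixes `u + S' u`,
`(1 - P') (u + S u) = (1 - P') (S u - S' u)`, so `(1 - P') P` factors through `S - S'` and is
compact; symmetrically so is `(1 - P) P'`. Their sum is `(P' - P)² = (P' - P)† (P' - P)`, and an
operator `T` with `T† T` compact is compact because `‖T x‖² ≤ ‖T† T x‖ ‖x‖`.
-/

variable {H : Type*} [NormedAddCommGroup H] [InnerProductSpace ℝ H] [CompleteSpace H]

open Metric Set ContinuousLinearMap
open scoped InnerProduct

theorem TotallyBounded.image_of_dist_sq_le {α β γ : Type*} [PseudoMetricSpace β]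
    [PseudoMetricSpace γ] {f : α → β} {g : α → γ} {s : Set α} {C : ℝ} (hC : 0 < C)
    (hf : TotallyBounded (f '' s))
    (hfg : ∀ x ∈ s, ∀ y ∈ s, dist (g x) (g y) ^ 2 ≤ C * dist (f x) (f y)) :
    TotallyBounded (g '' s) := by
  refine totallyBounded_iff.mpr fun ε hε => ?_
  obtain ⟨t, hts, htf, hcover⟩ := finite_approx_of_totallyBounded hf (ε ^ 2 / C) (by positivity)
  obtain ⟨u, hus, huf, hcover⟩ :=
    Set.exists_subset_image_finite_and (p := fun t => f '' s ⊆ ⋃ y ∈ t, ball y (ε ^ 2 / C)) |>.mp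
      ⟨t, hts, htf, hcover⟩
  refine ⟨g '' u, huf.image g, ?_⟩
  rintro _ ⟨x, hx, rfl⟩
  obtain ⟨_, ⟨y, hy, rfl⟩, hxy⟩ := mem_iUnion₂.mp (hcover (mem_image_of_mem f hx))
  refine mem_iUnion₂.mpr ⟨g y, mem_image_of_mem g hy, ?_⟩
  have hsq : dist (g x) (g y) ^ 2 < ε ^ 2 :=
    calc dist (g x) (g y) ^ 2 ≤ C * dist (f x) (f y) := hfg x hx y (hus hy)
      _ < C * (ε ^ 2 / C) := by gcongr; exact hxy
      _ = ε ^ 2 := by field_simp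
  exact mem_ball.mpr (lt_of_pow_lt_pow_left₀ 2 hε.le hsq)

section Adjoint

variable {𝕜 E F : Type*} [RCLike 𝕜] [NormedAddCommGroup E] [InnerProductSpace 𝕜 E]
  [CompleteSpace E] [NormedAddCommGroup F] [InnerProductSpace 𝕜 F] [CompleteSpace F]

theorem ContinuousLinearMap.norm_apply_sq_le_norm_adjoint_comp_apply_mul (T : E →L[𝕜] F)
    (x : E) :
    ‖T x‖ ^ 2 ≤ ‖(T† ∘L T) x‖ * ‖x‖ := by
  rw [apply_norm_sq_eq_inner_adjoint_left]
  exact (RCLike.re_le_norm _).trans (norm_inner_le_norm _ _)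

theorem IsCompactOperator.of_adjoint_comp {T : E →L[𝕜] F} (h : IsCompactOperator (T† ∘L T)) :
    IsCompactOperator T := by
  refine (isCompactOperator_iff_isCompact_closure_image_ball (T : E →ₗ[𝕜] F) one_pos).mpr ?_
  refine isCompact_iff_totallyBounded_isComplete.mpr ⟨TotallyBounded.closure ?_,
    isClosed_closure.isComplete⟩
  refine TotallyBounded.image_of_dist_sq_le two_pos
    ((h.isCompact_closure_image_ball 1).totallyBounded.subset subset_closure) ?_
  intro x hx y hy
  have hxy : ‖x - y‖ ≤ 2 := by
    have := norm_sub_le x y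
    rw [mem_ball_zero_iff] at hx hy
    linarith
  simp only [dist_eq_norm, ← map_sub]
  calc ‖T (x - y)‖ ^ 2 ≤ ‖(T† ∘L T) (x - y)‖ * ‖x - y‖ :=
        T.norm_apply_sq_le_norm_adjoint_comp_apply_mul _
    _ ≤ 2 * ‖(T† ∘L T) (x - y)‖ := by rw [mul_comm]; gcongr

end Adjoint

theorem IsIdempotentElem.sub_mul_self_sub {R : Type*} [Ring R] {p q : R}
    (hp : IsIdempotentElem p) (hq : IsIdempotentElem q) :
    (q - p) * (q - p) = (1 - q) * p + (1 - p) * q := by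
  simp only [sub_mul, mul_sub, one_mul, hp.eq, hq.eq]
  abel

section Graph

variable {𝕜 E : Type*} [NontriviallyNormedField 𝕜] [NormedAddCommGroup E] [NormedSpace 𝕜 E]
  {L₀ L₁ : Submodule 𝕜 E}

theorem Submodule.projectionOntoL_add_of_mem (h : L₀.IsTopCompl L₁) {S : L₀ →L[𝕜] E}
    (hS : ∀ u, S u ∈ L₁) (u : L₀) : L₀.projectionOntoL L₁ h (u + S u) = u := by
  rw [map_add, projectionOntoL_apply_left, projectionOntoL_apply_eq_zero_of_mem_right h (hS u),
    add_zero]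

theorem isCompactOperator_one_sub_comp_of_graph (h : L₀.IsTopCompl L₁)
    {S S' : L₀ →L[𝕜] E} (hS : ∀ u, S u ∈ L₁) (hcpt : IsCompactOperator (S - S')) {P Q : E →L[𝕜] E}
    (hP : ∀ x, ∃ u : L₀, P x = u + S u) (hQ : ∀ u : L₀, Q (u + S' u) = u + S' u) :
    IsCompactOperator ((1 - Q) ∘L P) := by
  have hfactor : (1 - Q) ∘L P = (1 - Q) ∘L (S - S') ∘L L₀.projectionOntoL L₁ h ∘L P := by
    ext x
    obtain ⟨u, hu⟩ := hP x
    have hQS : Q (u + S u) = u + S' u + Q (S u - S' u) := by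
      rw [← hQ u, ← map_add]
      congr 1
      abel
    simp only [comp_apply, hu, Submodule.projectionOntoL_add_of_mem h hS, sub_apply,
      one_apply_eq_self, hQS, map_sub]
    abel
  rw [hfactor]
  exact (hcpt.comp_clm (L₀.projectionOntoL L₁ h ∘L P)).clm_comp (1 - Q)

end Graph

section OrthProj

theorem orthProj_eq_starProjection_s17 (L : Submodule ℝ H) (hL : IsClosed (L : Set H)) :
    haveI := hL.completeSpace_coe
    orthProj L hL = L.starProjection :=
  rfl

theorem isIdempotentElem_orthProj (L : Submodule ℝ H) (hL : IsClosed (L : Set H)) :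
    IsIdempotentElem (orthProj L hL) := by
  have := hL.completeSpace_coe
  rw [orthProj_eq_starProjection_s17]
  exact L.isIdempotentElem_starProjection

theorem isSelfAdjoint_orthProj (L : Submodule ℝ H) (hL : IsClosed (L : Set H)) :
    IsSelfAdjoint (orthProj L hL) := by
  have := hL.completeSpace_coe
  rw [orthProj_eq_starProjection_s17]
  exact isSelfAdjoint_starProjection L

theorem orthProj_apply_mem (L : Submodule ℝ H) (hL : IsClosed (L : Set H)) (x : H) :
    orthProj L hL x ∈ L := by
  have := hL.completeSpace_coe
  rw [orthProj_eq_starProjection_s17]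
  exact L.starProjection_apply_mem x

theorem orthProj_apply_of_mem (L : Submodule ℝ H) (hL : IsClosed (L : Set H)) {x : H}
    (hx : x ∈ L) : orthProj L hL x = x := by
  have := hL.completeSpace_coe
  rw [orthProj_eq_starProjection_s17]
  exact Submodule.starProjection_eq_self_iff.mpr hx

variable {L₀ : Submodule ℝ H} (T : L₀ →L[ℝ] H)
  (hT : IsClosed (LinearMap.range ((L₀.subtypeL + T : L₀ →L[ℝ] H) : L₀ →ₗ[ℝ] H) : Set H))

theorem exists_orthProj_range_apply_eq (x : H) : ∃ u : L₀, orthProj _ hT x = u + T u :=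
  (orthProj_apply_mem _ hT x).imp fun _ hu => hu.symm

theorem orthProj_range_apply_add (u : L₀) : orthProj _ hT (u + T u) = u + T u :=
  orthProj_apply_of_mem _ hT ⟨u, rfl⟩

end OrthProj

/-- Let `(L₀, L₁)` be complementary closed subspaces and `S, S' : L₀ → L₁` bounded
operators with graphs `L = Gr(S)`, `L' = Gr(S')`.  If `S - S'` is compact, then
`P_{L'} - P_L` is compact. -/
theorem graph_compact_perturbation (L₀ L₁ : Submodule ℝ H)
    (hL₀c : IsClosed (L₀ : Set H)) (hL₁c : IsClosed (L₁ : Set H))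
    (hcompl₁ : L₀ ⊓ L₁ = ⊥) (hcompl₂ : L₀ ⊔ L₁ = ⊤)
    (S S' : ↥L₀ →L[ℝ] H) (hS : ∀ u : ↥L₀, S u ∈ L₁) (hS' : ∀ u : ↥L₀, S' u ∈ L₁)
    (L L' : Submodule ℝ H)
    (hL : L = LinearMap.range ((L₀.subtypeL + S : ↥L₀ →L[ℝ] H) : ↥L₀ →ₗ[ℝ] H)) (hL' : L' = LinearMap.range ((L₀.subtypeL + S' : ↥L₀ →L[ℝ] H) : ↥L₀ →ₗ[ℝ] H))
    (hLc : IsClosed (L : Set H)) (hL'c : IsClosed (L' : Set H))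
    (hcpt : IsCompactOperator (⇑(S - S'))) :
    IsCompactOperator (⇑(orthProj L' hL'c - orthProj L hLc)) := by
  have hcompl : L₀.IsTopCompl L₁ := Submodule.IsCompl.isTopCompl_of_isClosed
    ⟨disjoint_iff.mpr hcompl₁, codisjoint_iff.mpr hcompl₂⟩ hL₀c hL₁c
  subst hL hL'
  set P := orthProj _ hLc
  set P' := orthProj _ hL'c
  have hsq : (P' - P)† ∘L (P' - P) = (1 - P') ∘L P + (1 - P) ∘L P' := by
    rw [((isSelfAdjoint_orthProj _ hL'c).sub (isSelfAdjoint_orthProj _ hLc)).adjoint_eq]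
    exact (isIdempotentElem_orthProj _ hLc).sub_mul_self_sub (isIdempotentElem_orthProj _ hL'c)
  refine IsCompactOperator.of_adjoint_comp ?_
  rw [hsq]
  exact (isCompactOperator_one_sub_comp_of_graph hcompl hS hcpt
      (exists_orthProj_range_apply_eq S hLc) (orthProj_range_apply_add S' hL'c)).add
    (isCompactOperator_one_sub_comp_of_graph hcompl hS' (by simpa using hcpt.neg)
      (exists_orthProj_range_apply_eq S' hL'c) (orthProj_range_apply_add S hLc))
end
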